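/- arXiv:1905.07983 — 2 statements merged into one kernel-verified Lean document; each statement's English description precedes it below -/
import Mathlib

section
/- Let N ≥ 1, α, β > −1, and let z_1 < ... < z_N be the ordered zeros of the Jacobi polynomial P_N^{(α,β)}. Let S̃ be the N×N matrix with entries s̃_{j,j} = 4Σ_{l≠j}(1−z_j²)/(z_j−z_l)² + 2(α+1)(1+z_j)/(1−z_j) + 2(β+1)(1−z_j)/(1+z_j) and s̃_{i,j} = −4√((1−z_i²)(1−z_j²))/(z_i−z_j)² for i ≠ j. Then the vector v₁ = (√(1−z_1²), ..., √(1−z_N²))^T satisfies S̃ v₁ = 2(2N+α+β) v₁; that is, v₁ is an eigenvector of S̃ with eigenvalue λ₁ = 2(2N+α+β). -/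
open MeasureTheory Filter Real Finset Topology

/-!
Orthogonality makes `P` an eigenfunction of the Jacobi operator
`L = (1 - x²) D² + (β - α - (α + β + 2) x) D`: since `L` is symmetric for the weight
`w(x) = (1 - x)^α (1 + x)^β` (integrate by parts; the boundary terms vanish because
`α, β > -1`) and does not raise degrees, `(L + N(N + α + β + 1)) P` has degree `< N` and is
orthogonal to every polynomial of degree `< N`, so it is zero. Writing `P = c ∏ (X - z_j)`
and evaluating this equation at `z_i` gives the Stieltjes relation
`2 (1 - z_i²) ∑_{l ≠ i} 1 / (z_i - z_l) = (α + β + 2) z_i + α - β`.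
The `i`-th entry of `S̃ v₁` is `√(1 - z_i²)` times a sum that this relation collapses to
`2 (2N + α + β)`.
-/

open Polynomial

noncomputable def jacobiWeight (α β x : ℝ) : ℝ :=
  (1 - x) ^ α * (1 + x) ^ β

noncomputable def jacobiIntegral (α β : ℝ) (A : ℝ[X]) : ℝ :=
  ∫ x in Set.Ioo (-1 : ℝ) 1, A.eval x * jacobiWeight α β x

noncomputable def jacobiDeriv (α β : ℝ) (W : ℝ[X]) : ℝ[X] :=
  (1 - X ^ 2) * derivative W + C (β - α) * W - C (α + β + 2) * (X * W)

noncomputable def jacobiOp (α β : ℝ) (A : ℝ[X]) : ℝ[X] :=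
  jacobiDeriv α β (derivative A)

noncomputable def jacobiFlux (α β : ℝ) (W : ℝ[X]) (x : ℝ) : ℝ :=
  (1 - x) ^ (α + 1) * (1 + x) ^ (β + 1) * W.eval x

section Jacobi

variable {α β : ℝ}

theorem jacobiWeight_pos {x : ℝ} (hx : x ∈ Set.Ioo (-1 : ℝ) 1) : 0 < jacobiWeight α β x :=
  mul_pos (rpow_pos_of_pos (by linarith [hx.2]) _) (rpow_pos_of_pos (by linarith [hx.1]) _)

theorem intervalIntegrable_jacobiWeight (hα : -1 < α) (hβ : -1 < β) :
    IntervalIntegrable (jacobiWeight α β) volume (-1) 1 := by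
  have hleft : IntervalIntegrable (jacobiWeight α β) volume (-1) 0 := by
    have h := (intervalIntegral.intervalIntegrable_rpow' hβ (a := 0) (b := 1)).comp_add_left 1
    norm_num at h
    refine h.continuousOn_mul (ContinuousOn.rpow_const (by fun_prop) fun x hx => Or.inl ?_)
    rw [Set.uIcc_of_le (by norm_num)] at hx
    linarith [hx.2]
  have hright : IntervalIntegrable (jacobiWeight α β) volume 0 1 := by
    have h := (intervalIntegral.intervalIntegrable_rpow' hα (a := 1) (b := 0)).comp_sub_left 1
    norm_num at h
    refine h.mul_continuousOn (ContinuousOn.rpow_const (by fun_prop) fun x hx => Or.inl ?_)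
    rw [Set.uIcc_of_le (by norm_num)] at hx
    linarith [hx.1]
  exact hleft.trans hright

theorem intervalIntegrable_eval_mul_jacobiWeight (hα : -1 < α) (hβ : -1 < β) (A : ℝ[X]) :
    IntervalIntegrable (fun x => A.eval x * jacobiWeight α β x) volume (-1) 1 :=
  (intervalIntegrable_jacobiWeight hα hβ).continuousOn_mul A.continuous.continuousOn

theorem integrableOn_eval_mul_jacobiWeight (hα : -1 < α) (hβ : -1 < β) (A : ℝ[X]) :
    IntegrableOn (fun x => A.eval x * jacobiWeight α β x) (Set.Ioo (-1) 1) :=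
  (intervalIntegrable_iff_integrableOn_Ioo_of_le (by norm_num)).1
    (intervalIntegrable_eval_mul_jacobiWeight hα hβ A)

theorem jacobiIntegral_add (hα : -1 < α) (hβ : -1 < β) (A B : ℝ[X]) :
    jacobiIntegral α β (A + B) = jacobiIntegral α β A + jacobiIntegral α β B := by
  rw [jacobiIntegral, jacobiIntegral, jacobiIntegral, ← integral_add
    (integrableOn_eval_mul_jacobiWeight hα hβ A) (integrableOn_eval_mul_jacobiWeight hα hβ B)]
  simp only [eval_add, add_mul]

theorem jacobiIntegral_sub (hα : -1 < α) (hβ : -1 < β) (A B : ℝ[X]) :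
    jacobiIntegral α β (A - B) = jacobiIntegral α β A - jacobiIntegral α β B := by
  rw [jacobiIntegral, jacobiIntegral, jacobiIntegral, ← integral_sub
    (integrableOn_eval_mul_jacobiWeight hα hβ A) (integrableOn_eval_mul_jacobiWeight hα hβ B)]
  simp only [eval_sub, sub_mul]

theorem jacobiIntegral_C_mul (c : ℝ) (A : ℝ[X]) :
    jacobiIntegral α β (C c * A) = c * jacobiIntegral α β A := by
  rw [jacobiIntegral, jacobiIntegral, ← integral_const_mul]
  simp only [eval_mul, eval_C, mul_assoc]

theorem jacobiIntegral_mul_self_pos (hα : -1 < α) (hβ : -1 < β) {R : ℝ[X]} (hR : R ≠ 0) :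
    0 < jacobiIntegral α β (R * R) := by
  have hnonneg : 0 ≤ᵐ[volume.restrict (Set.Ioo (-1 : ℝ) 1)]
      fun x => (R * R).eval x * jacobiWeight α β x :=
    ae_restrict_of_forall_mem measurableSet_Ioo fun x hx => by
      simpa only [Pi.zero_apply, eval_mul] using
        mul_nonneg (mul_self_nonneg _) (jacobiWeight_pos hx).le
  rw [jacobiIntegral, setIntegral_pos_iff_support_of_nonneg_ae hnonneg
    (integrableOn_eval_mul_jacobiWeight hα hβ _)]
  have hsub : Set.Ioo (-1 : ℝ) 1 \ {x | R.IsRoot x} ⊆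
      Function.support (fun x => (R * R).eval x * jacobiWeight α β x) ∩ Set.Ioo (-1) 1 := by
    rintro x ⟨hx, hRx⟩
    rw [Set.mem_inter_iff, Function.mem_support, eval_mul]
    exact ⟨mul_ne_zero (mul_ne_zero hRx hRx) (jacobiWeight_pos hx).ne', hx⟩
  refine lt_of_lt_of_le ?_ (measure_mono hsub)
  rw [measure_sdiff_null ((finite_setOfPred_isRoot hR).measure_zero volume), Real.volume_Ioo]
  norm_num

theorem hasDerivAt_jacobiFlux (W : ℝ[X]) {x : ℝ} (hx : x ∈ Set.Ioo (-1 : ℝ) 1) :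
    HasDerivAt (jacobiFlux α β W) ((jacobiDeriv α β W).eval x * jacobiWeight α β x) x := by
  have h1 : 0 < 1 - x := by linarith [hx.2]
  have h2 : 0 < 1 + x := by linarith [hx.1]
  have d1 : HasDerivAt (fun y : ℝ => (1 - y) ^ (α + 1)) (-(α + 1) * (1 - x) ^ α) x := by
    simpa using ((hasDerivAt_id x).const_sub 1).rpow_const (p := α + 1) (Or.inl h1.ne')
  have d2 : HasDerivAt (fun y : ℝ => (1 + y) ^ (β + 1)) ((β + 1) * (1 + x) ^ β) x := by
    simpa using ((hasDerivAt_id x).const_add 1).rpow_const (p := β + 1) (Or.inl h2.ne')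
  refine ((d1.mul d2).mul (W.hasDerivAt x)).congr_deriv ?_
  simp only [Pi.mul_apply]
  rw [Real.rpow_add_one h1.ne', Real.rpow_add_one h2.ne']
  simp only [jacobiDeriv, jacobiWeight, eval_add, eval_mul, eval_sub, eval_one, eval_pow, eval_X,
    eval_C]
  ring

theorem tendsto_jacobiFlux_left (hβ : -1 < β) (W : ℝ[X]) :
    Tendsto (jacobiFlux α β W) (𝓝[>] (-1)) (𝓝 0) := by
  have h : ContinuousAt (jacobiFlux α β W) (-1) :=
    ((ContinuousAt.rpow_const (by fun_prop) (Or.inl (by norm_num))).mul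
      (ContinuousAt.rpow_const (by fun_prop) (Or.inr (by linarith)))).mul W.continuousAt
  simpa [jacobiFlux, Real.zero_rpow (by linarith : β + 1 ≠ 0)] using
    h.tendsto.mono_left nhdsWithin_le_nhds

theorem tendsto_jacobiFlux_right (hα : -1 < α) (W : ℝ[X]) :
    Tendsto (jacobiFlux α β W) (𝓝[<] 1) (𝓝 0) := by
  have h : ContinuousAt (jacobiFlux α β W) 1 :=
    ((ContinuousAt.rpow_const (by fun_prop) (Or.inr (by linarith))).mul
      (ContinuousAt.rpow_const (by fun_prop) (Or.inl (by norm_num)))).mul W.continuousAt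
  simpa [jacobiFlux, Real.zero_rpow (by linarith : α + 1 ≠ 0)] using
    h.tendsto.mono_left nhdsWithin_le_nhds

theorem jacobiIntegral_jacobiDeriv (hα : -1 < α) (hβ : -1 < β) (W : ℝ[X]) :
    jacobiIntegral α β (jacobiDeriv α β W) = 0 := by
  rw [jacobiIntegral, ← integral_Ioc_eq_integral_Ioo,
    ← intervalIntegral.integral_of_le (by norm_num),
    intervalIntegral.integral_eq_sub_of_hasDerivAt_of_tendsto (by norm_num)
      (fun x hx => hasDerivAt_jacobiFlux W hx) (intervalIntegrable_eval_mul_jacobiWeight hα hβ _)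
      (tendsto_jacobiFlux_left hβ W) (tendsto_jacobiFlux_right hα W), sub_self]

theorem jacobiOp_mul_sub_mul_jacobiOp (A B : ℝ[X]) :
    jacobiOp α β A * B - A * jacobiOp α β B =
      jacobiDeriv α β (derivative A * B - A * derivative B) := by
  simp only [jacobiOp, jacobiDeriv, derivative_sub, derivative_mul]
  ring

theorem jacobiIntegral_jacobiOp_mul (hα : -1 < α) (hβ : -1 < β) (A B : ℝ[X]) :
    jacobiIntegral α β (jacobiOp α β A * B) = jacobiIntegral α β (A * jacobiOp α β B) := by
  rw [← sub_eq_zero, ← jacobiIntegral_sub hα hβ, jacobiOp_mul_sub_mul_jacobiOp,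
    jacobiIntegral_jacobiDeriv hα hβ]

theorem coeff_jacobiOp (A : ℝ[X]) (n : ℕ) :
    (jacobiOp α β A).coeff n = (n + 1) * (n + 2) * A.coeff (n + 2) +
      (β - α) * (n + 1) * A.coeff (n + 1) - n * (n + α + β + 1) * A.coeff n := by
  rcases n with _ | _ | n <;>
    simp only [jacobiOp, jacobiDeriv, coeff_derivative, sub_mul, one_mul, coeff_sub, coeff_add,
      coeff_X_pow_mul', coeff_X_mul, coeff_X_mul_zero, coeff_C_mul] <;> push_cast <;> ring

theorem natDegree_jacobiOp_le (A : ℝ[X]) : (jacobiOp α β A).natDegree ≤ A.natDegree := by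
  refine natDegree_le_iff_coeff_eq_zero.2 fun n hn => ?_
  rw [coeff_jacobiOp, coeff_eq_zero_of_natDegree_lt hn, coeff_eq_zero_of_natDegree_lt (by omega),
    coeff_eq_zero_of_natDegree_lt (by omega)]
  ring

theorem jacobiOp_add_C_mul_eq_zero_of_orthogonal (hα : -1 < α) (hβ : -1 < β) {P : ℝ[X]}
    {N : ℕ} (hdeg : P.natDegree = N)
    (horth : ∀ Q : ℝ[X], Q.natDegree < N → jacobiIntegral α β (P * Q) = 0) :
    jacobiOp α β P + C (N * (N + α + β + 1)) * P = 0 := by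
  set R := jacobiOp α β P + C (N * (N + α + β + 1)) * P
  have hRdeg : R.degree < N := by
    refine (degree_lt_iff_coeff_zero _ _).2 fun n hn => ?_
    rw [coeff_add, coeff_C_mul, coeff_jacobiOp, coeff_eq_zero_of_natDegree_lt (by omega),
      coeff_eq_zero_of_natDegree_lt (by omega)]
    rcases hn.eq_or_lt with rfl | hlt
    · ring
    · rw [coeff_eq_zero_of_natDegree_lt (by omega)]
      ring
  have hRorth : ∀ Q : ℝ[X], Q.natDegree < N → jacobiIntegral α β (R * Q) = 0 := by
    intro Q hQ
    rw [add_mul, jacobiIntegral_add hα hβ, jacobiIntegral_jacobiOp_mul hα hβ, mul_assoc,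
      jacobiIntegral_C_mul, horth Q hQ, horth _ ((natDegree_jacobiOp_le Q).trans_lt hQ)]
    ring
  by_contra hR
  exact (jacobiIntegral_mul_self_pos hα hβ hR).ne'
    (hRorth R ((natDegree_lt_iff_degree_lt hR).2 hRdeg))

end Jacobi

section Nodal

variable {K ι : Type*} [Field K] {s : Finset ι} {v : ι → K}

theorem eq_C_leadingCoeff_mul_nodal {P : K[X]} (hvs : Set.InjOn v s) (hdeg : P.natDegree = #s)
    (hroot : ∀ i ∈ s, P.eval (v i) = 0) :
    P = C P.leadingCoeff * Lagrange.nodal s v := by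
  rcases eq_or_ne P 0 with rfl | hP
  · simp
  have hlc : P.leadingCoeff ≠ 0 := leadingCoeff_ne_zero.2 hP
  refine eq_of_degree_le_of_eval_index_eq s hvs ?_ ?_ ?_ fun i hi => ?_
  · rw [degree_eq_natDegree hP, hdeg]
  · rw [degree_C_mul hlc, Lagrange.degree_nodal, degree_eq_natDegree hP, hdeg]
  · rw [leadingCoeff_mul, leadingCoeff_C, Lagrange.nodal_monic.leadingCoeff, mul_one]
  · rw [hroot i hi, eval_mul, Lagrange.eval_nodal_at_node hi, mul_zero]

theorem eval_derivative_nodal_of_ne [DecidableEq ι] {x : K} (hx : ∀ j ∈ s, x ≠ v j) :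
    (derivative (Lagrange.nodal s v)).eval x =
      (Lagrange.nodal s v).eval x * ∑ j ∈ s, (x - v j)⁻¹ := by
  rw [Lagrange.derivative_nodal, eval_finsetSum, mul_sum]
  refine sum_congr rfl fun j hj => ?_
  rw [Lagrange.nodal_eq_mul_nodal_erase hj, eval_mul, mul_comm, ← mul_assoc]
  simp [sub_ne_zero.2 (hx j hj)]

theorem eval_derivative_derivative_nodal_at_node [DecidableEq ι] (hvs : Set.InjOn v s) {i : ι}
    (hi : i ∈ s) :
    (derivative (derivative (Lagrange.nodal s v))).eval (v i) =
      2 * (derivative (Lagrange.nodal s v)).eval (v i) * ∑ j ∈ s.erase i, (v i - v j)⁻¹ := by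
  have hne : ∀ j ∈ s.erase i, v i ≠ v j := fun j hj =>
    hvs.ne hi (mem_of_mem_erase hj) (ne_of_mem_erase hj).symm
  rw [Lagrange.eval_nodal_derivative_eval_node_eq hi, mul_assoc,
    ← eval_derivative_nodal_of_ne hne, Lagrange.nodal_eq_mul_nodal_erase hi]
  simp only [derivative_mul, derivative_add, derivative_sub, derivative_X, derivative_C,
    sub_zero, one_mul, eval_add, eval_mul, eval_sub, eval_X, eval_C, sub_self, zero_mul, add_zero]
  ring

end Nodal

theorem jacobi_stieltjes_relation {ι : Type*} [DecidableEq ι] {α β c : ℝ} {s : Finset ι}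
    {z : ι → ℝ} (hzs : Set.InjOn z s) (hc : c ≠ 0) {i : ι} (hi : i ∈ s)
    (hL : (jacobiOp α β (C c * Lagrange.nodal s z)).eval (z i) = 0) :
    2 * (1 - z i ^ 2) * ∑ j ∈ s.erase i, (z i - z j)⁻¹ = (α + β + 2) * z i + α - β := by
  have hne : ∀ j ∈ s.erase i, z i ≠ z j := fun j hj =>
    hzs.ne hi (mem_of_mem_erase hj) (ne_of_mem_erase hj).symm
  have hd : (derivative (Lagrange.nodal s z)).eval (z i) ≠ 0 := by
    rw [Lagrange.eval_nodal_derivative_eval_node_eq hi]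
    exact Lagrange.eval_nodal_not_at_node hne
  simp only [jacobiOp, jacobiDeriv, derivative_C_mul, eval_add, eval_sub, eval_mul, eval_one,
    eval_pow, eval_X, eval_C, eval_derivative_derivative_nodal_at_node hzs hi] at hL
  have hfactor : c * (derivative (Lagrange.nodal s z)).eval (z i) *
      (2 * (1 - z i ^ 2) * ∑ j ∈ s.erase i, (z i - z j)⁻¹ -
        ((α + β + 2) * z i + α - β)) = 0 := by
    linear_combination hL
  exact sub_eq_zero.1 ((mul_eq_zero.1 hfactor).resolve_left (mul_ne_zero hc hd))

theorem jacobi_trig_row_identity {ι : Type*} {α β x : ℝ} {t : Finset ι} {y : ι → ℝ}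
    (hx : x ∈ Set.Ioo (-1 : ℝ) 1) (hy : ∀ j ∈ t, x ≠ y j)
    (hrel : 2 * (1 - x ^ 2) * ∑ j ∈ t, (x - y j)⁻¹ = (α + β + 2) * x + α - β) :
    4 * (∑ j ∈ t, (1 - x ^ 2) / (x - y j) ^ 2) + 2 * (α + 1) * ((1 + x) / (1 - x)) +
        2 * (β + 1) * ((1 - x) / (1 + x)) + ∑ j ∈ t, (1 - y j ^ 2) * (-4 / (x - y j) ^ 2) =
      2 * (2 * (#t + 1) + α + β) := by
  have h1 : 1 - x ≠ 0 := by linarith [hx.2]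
  have h2 : 1 + x ≠ 0 := by linarith [hx.1]
  -- termwise, `((1 - x²) - (1 - y²)) / (x - y)² = 1 - 2x / (x - y)`
  have hsum : 4 * (∑ j ∈ t, (1 - x ^ 2) / (x - y j) ^ 2) +
      ∑ j ∈ t, (1 - y j ^ 2) * (-4 / (x - y j) ^ 2) =
      4 * #t - 8 * x * ∑ j ∈ t, (x - y j)⁻¹ := by
    have hcard : (4 : ℝ) * #t = ∑ _j ∈ t, 4 := by rw [sum_const, nsmul_eq_mul, mul_comm]
    rw [hcard, mul_sum, mul_sum, ← sum_add_distrib,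
      ← sum_sub_distrib]
    refine sum_congr rfl fun j hj => ?_
    have := sub_ne_zero.2 (hy j hj)
    field_simp
    ring
  have hrest : 4 * #t - 8 * x * ∑ j ∈ t, (x - y j)⁻¹ + 2 * (α + 1) * ((1 + x) / (1 - x)) +
      2 * (β + 1) * ((1 - x) / (1 + x)) = 2 * (2 * (#t + 1) + α + β) := by
    generalize ∑ j ∈ t, (x - y j)⁻¹ = S at hrel ⊢
    field_simp
    linear_combination (-4 * x) * hrel
  linear_combination hsum + hrest

theorem mulVec_sqrt_apply {ι : Type*} [Fintype ι] [DecidableEq ι] {M : Matrix ι ι ℝ}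
    {w : ι → ℝ} {k : ι → ι → ℝ} (hw : ∀ i, 0 ≤ w i)
    (hoff : ∀ i j, i ≠ j → M i j = √(w i * w j) * k i j) (i : ι) :
    M.mulVec (fun j => √(w j)) i = √(w i) * (M i i + ∑ j ∈ univ.erase i, w j * k i j) := by
  rw [Matrix.mulVec, dotProduct, ← add_sum_erase _ _ (mem_univ i), mul_add, mul_sum, mul_comm]
  congr 1
  refine sum_congr rfl fun j hj => ?_
  rw [hoff i j (mem_erase.1 hj).1.symm, sqrt_mul (hw i)]
  linear_combination (√(w i) * k i j) * mul_self_sqrt (hw j)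

theorem trig_jacobi_matrix_first_eigenvector_general
    (N : ℕ) (α β : ℝ) (hα : -1 < α) (hβ : -1 < β)
    (P : Polynomial ℝ) (hPdeg : P.natDegree = N)
    (hPorth : ∀ Q : Polynomial ℝ, Q.natDegree < N →
      ∫ x in Set.Ioo (-1 : ℝ) 1,
        P.eval x * Q.eval x * (1 - x) ^ α * (1 + x) ^ β = 0)
    (z : Fin N → ℝ) (hzmono : StrictMono z)
    (hzroot : ∀ i, P.eval (z i) = 0)
    (hzmem : ∀ i, z i ∈ Set.Ioo (-1 : ℝ) 1)
    (S : Matrix (Fin N) (Fin N) ℝ)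
    (hS : S = Matrix.of fun i j =>
      if i = j then
        4 * (∑ l ∈ Finset.univ.erase j, (1 - z j ^ 2) / (z j - z l) ^ 2) +
          2 * (α + 1) * ((1 + z j) / (1 - z j)) + 2 * (β + 1) * ((1 - z j) / (1 + z j))
      else -4 * Real.sqrt ((1 - z i ^ 2) * (1 - z j ^ 2)) / (z i - z j) ^ 2)
    : S.mulVec (fun i => Real.sqrt (1 - z i ^ 2)) =
      (2 * (2 * (N : ℝ) + α + β)) • fun i => Real.sqrt (1 - z i ^ 2) := by
  have hzinj : Set.InjOn z (univ : Finset (Fin N)) := hzmono.injective.injOn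
  have hode := jacobiOp_add_C_mul_eq_zero_of_orthogonal hα hβ hPdeg fun Q hQ => by
    simpa only [jacobiIntegral, jacobiWeight, eval_mul, mul_assoc] using hPorth Q hQ
  have hfac := eq_C_leadingCoeff_mul_nodal hzinj (by simpa using hPdeg) fun i _ => hzroot i
  funext i
  have hP : P ≠ 0 := ne_zero_of_natDegree_gt (hPdeg ▸ i.pos)
  have hrel := jacobi_stieltjes_relation hzinj (leadingCoeff_ne_zero.2 hP) (mem_univ i) (by
    rw [← hfac]
    simpa [hzroot i] using congrArg (eval (z i)) hode)
  have hcard : ((#(univ.erase i) : ℕ) : ℝ) + 1 = N := by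
    rw [← Nat.cast_add_one, card_erase_add_one (mem_univ i), card_univ, Fintype.card_fin]
  calc S.mulVec (fun j => √(1 - z j ^ 2)) i
      = √(1 - z i ^ 2) *
          (S i i + ∑ j ∈ univ.erase i, (1 - z j ^ 2) * (-4 / (z i - z j) ^ 2)) :=
        mulVec_sqrt_apply (w := fun j => 1 - z j ^ 2) (k := fun j l => -4 / (z j - z l) ^ 2)
          (fun j => by nlinarith [(hzmem j).1, (hzmem j).2])
          (fun j l hjl => by rw [hS, Matrix.of_apply, if_neg hjl]; ring) i
    _ = √(1 - z i ^ 2) * (2 * (2 * N + α + β)) := by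
        rw [hS, Matrix.of_apply, if_pos rfl, jacobi_trig_row_identity (hzmem i)
          (fun j hj => hzmono.injective.ne (mem_erase.1 hj).1.symm) hrel, hcard]
    _ = _ := mul_comm _ _

theorem trig_jacobi_matrix_first_eigenvector
    (N : ℕ) (hN : 1 ≤ N) (α β : ℝ) (hα : -1 < α) (hβ : -1 < β)
    (P : Polynomial ℝ) (hPdeg : P.natDegree = N)
    (hPorth : ∀ Q : Polynomial ℝ, Q.natDegree < N →
      ∫ x in Set.Ioo (-1 : ℝ) 1,
        P.eval x * Q.eval x * (1 - x) ^ α * (1 + x) ^ β = 0)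
    (hPone : P.eval 1 = (∏ j ∈ Finset.range N, (α + 1 + j)) / (N.factorial : ℝ))
    (z : Fin N → ℝ) (hzmono : StrictMono z)
    (hzroot : ∀ i, P.eval (z i) = 0)
    (hzmem : ∀ i, z i ∈ Set.Ioo (-1 : ℝ) 1)
    (S : Matrix (Fin N) (Fin N) ℝ)
    (hS : S = Matrix.of fun i j =>
      if i = j then
        4 * (∑ l ∈ Finset.univ.erase j, (1 - z j ^ 2) / (z j - z l) ^ 2) +
          2 * (α + 1) * ((1 + z j) / (1 - z j)) + 2 * (β + 1) * ((1 - z j) / (1 + z j))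
      else -4 * Real.sqrt ((1 - z i ^ 2) * (1 - z j ^ 2)) / (z i - z j) ^ 2)
    : S.mulVec (fun i => Real.sqrt (1 - z i ^ 2)) =
      (2 * (2 * (N : ℝ) + α + β)) • fun i => Real.sqrt (1 - z i ^ 2) :=
  trig_jacobi_matrix_first_eigenvector_general N α β hα hβ P hPdeg hPorth z hzmono hzroot hzmem S hS
end

section
/- Let N ≥ 1 and β > −1, and let z_1 < ... < z_N be the ordered zeros of the generalized Laguerre polynomial L_N^{(β)}; all z_j are positive. Let S^L be the N×N matrix with entries s^L_{j,j} = (β+1)/z_j² + 2Σ_{l≠j} 1/(z_j−z_l)² and s^L_{i,j} = −2/(z_i−z_j)² for i ≠ j. Then det(S^L) = N!/(β+1)_N, where (x)_N = x(x+1)···(x+N−1) denotes the Pochhammer symbol. -/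
/-!
`L_N^{(β)}` is a multiple of `p = ∏ (X - C (z j))`, so `p` solves the Laguerre equation
`D p = x p'' + (β + 1 - x) p' + N p = 0`: `D` is symmetric for the weight `x ^ β e ^ (-x)` and
maps degree `≤ N` to degree `< N`, so `D p` is orthogonal to itself.
Writing `p = (X - z i) ω_i`, this equation and its derivative at the nodes give
`(D ω_i)(z j) = z j ω_j(z j) S j i`. On polynomials of degree `< N`, `D` is upper triangular in
the monomial basis with diagonal `N - k`, and the matrix of values `ω_i(z j)` is diagonal; hence
`det S = N! / ∏ z j`. Finally the coefficient recursion of `D p = 0` gives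
`∏ z j = (-1) ^ N p(0) = (β + 1)_N`.
-/

open MeasureTheory Filter Real Finset Topology Polynomial Lagrange Matrix
open scoped Nat

theorem eq_prod_range_mul_of_forall_eq_mul_succ {M : Type*} [CommMonoid M] {e c : ℕ → M}
    {n : ℕ} (h : ∀ k < n, e k = c k * e (k + 1)) : e 0 = (∏ k ∈ range n, c k) * e n := by
  induction n with
  | zero => simp
  | succ n ih =>
    rw [ih fun k hk => h k (by omega), h n (by omega), prod_range_succ, mul_assoc]

noncomputable def laguerreOp (β : ℝ) (n : ℕ) : ℝ[X] →ₗ[ℝ] ℝ[X] :=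
  LinearMap.mulLeft ℝ X ∘ₗ derivative ∘ₗ derivative +
    LinearMap.mulLeft ℝ (C (β + 1) - X) ∘ₗ derivative + (n : ℝ) • LinearMap.id

section LaguerreOp

variable {β : ℝ} {n : ℕ}

theorem laguerreOp_apply (q : ℝ[X]) :
    laguerreOp β n q =
      X * derivative (derivative q) + (C (β + 1) - X) * derivative q + C (n : ℝ) * q := by
  simp [laguerreOp, smul_eq_C_mul]

theorem coeff_laguerreOp (q : ℝ[X]) (k : ℕ) :
    (laguerreOp β n q).coeff k =
      ((n : ℝ) - k) * q.coeff k + (k + 1) * (k + 1 + β) * q.coeff (k + 1) := by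
  rw [laguerreOp_apply]
  rcases k with _ | k
  · simp only [coeff_add, coeff_X_mul_zero, sub_mul, coeff_sub, coeff_C_mul, coeff_derivative]
    push_cast
    ring
  · simp only [coeff_add, coeff_X_mul, sub_mul, coeff_sub, coeff_C_mul, coeff_derivative]
    push_cast
    ring

theorem degree_laguerreOp_lt {q : ℝ[X]} (hq : q.natDegree ≤ n) :
    (laguerreOp β n q).degree < n := by
  refine degree_lt_iff_coeff_zero _ _ |>.mpr fun k hk => ?_
  rw [coeff_laguerreOp, coeff_eq_zero_of_natDegree_lt (by omega : q.natDegree < k + 1)]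
  rcases hk.eq_or_lt with rfl | hk
  · simp
  · simp [coeff_eq_zero_of_natDegree_lt (hq.trans_lt hk)]

theorem natDegree_laguerreOp_lt {q : ℝ[X]} (hq : q.natDegree < n) :
    (laguerreOp β n q).natDegree < n := by
  by_cases h : laguerreOp β n q = 0
  · rw [h, natDegree_zero]
    exact Nat.zero_lt_of_lt hq
  · exact (natDegree_lt_iff_degree_lt h).mpr (degree_laguerreOp_lt hq.le)

theorem laguerreOp_X_sub_C_mul (a : ℝ) (q : ℝ[X]) :
    laguerreOp β n ((X - C a) * q) =
      (X - C a) * laguerreOp β n q + 2 * X * derivative q + (C (β + 1) - X) * q := by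
  simp only [laguerreOp_apply, derivative_mul, derivative_sub, derivative_X, derivative_C,
    sub_zero, one_mul, derivative_add]
  ring

theorem laguerreOp_mul_sub_mul_laguerreOp (A B : ℝ[X]) :
    laguerreOp β n A * B - A * laguerreOp β n B =
      (C (β + 1) - X) * (derivative A * B - A * derivative B) +
        X * derivative (derivative A * B - A * derivative B) := by
  simp only [laguerreOp_apply, derivative_mul, derivative_sub]
  ring

theorem coeff_zero_of_laguerreOp_eq_zero {q : ℝ[X]} (hq : laguerreOp β n q = 0) :
    q.coeff 0 = (-1) ^ n * (∏ k ∈ range n, (β + 1 + k)) * q.coeff n := by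
  have hrec (k : ℕ) :
      ((n : ℝ) - k) * q.coeff k + (k + 1) * (k + 1 + β) * q.coeff (k + 1) = 0 := by
    rw [← coeff_laguerreOp, hq, coeff_zero]
  -- `k! (n - k)! q_k` satisfies a first-order recursion with factors `-(β + 1 + k)`.
  set e : ℕ → ℝ := fun k => k ! * (n - k)! * q.coeff k
  have he : ∀ k < n, e k = -(β + 1 + k) * e (k + 1) := by
    intro k hk
    obtain ⟨m, rfl⟩ := Nat.exists_eq_add_of_lt hk
    have hrec := hrec k
    simp only [e, show k + m + 1 - k = m + 1 by omega, show k + m + 1 - (k + 1) = m by omega,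
      Nat.factorial_succ] at hrec ⊢
    push_cast at hrec ⊢
    linear_combination (k ! * m ! : ℝ) * hrec
  have := eq_prod_range_mul_of_forall_eq_mul_succ he
  simp only [e, prod_neg, card_range, Nat.factorial_zero, Nat.sub_zero, Nat.sub_self,
    Nat.cast_one, one_mul, mul_one] at this
  apply mul_left_cancel₀ (by positivity : (n ! : ℝ) ≠ 0)
  linear_combination this

end LaguerreOp

noncomputable def laguerreInner (β : ℝ) (A B : ℝ[X]) : ℝ :=
  ∫ x in Set.Ioi (0 : ℝ), A.eval x * B.eval x * x ^ β * exp (-x)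

theorem eval_mul_rpow_eq_sum (P : ℝ[X]) {x : ℝ} (hx : 0 < x) (a : ℝ) :
    P.eval x * x ^ a = ∑ k ∈ range (P.natDegree + 1), P.coeff k * x ^ (a + k) := by
  rw [eval_eq_sum_range, sum_mul]
  refine sum_congr rfl fun k _ => ?_
  rw [rpow_add hx, rpow_natCast]
  ring

section LaguerreInner

variable {β : ℝ} (hβ : -1 < β)
include hβ

theorem integrableOn_eval_mul_rpow_mul_exp_neg (P : ℝ[X]) :
    IntegrableOn (fun x => P.eval x * x ^ β * exp (-x)) (Set.Ioi 0) := by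
  have hmono (k : ℕ) : IntegrableOn (fun x => x ^ (β + k) * exp (-x)) (Set.Ioi 0) := by
    have hk : 0 < β + k + 1 := by linarith [k.cast_nonneg (α := ℝ)]
    refine (GammaIntegral_convergent hk).congr_fun (fun x _ => ?_) measurableSet_Ioi
    simp only [add_sub_cancel_right, mul_comm]
  refine IntegrableOn.congr_fun (integrable_finsetSum (range (P.natDegree + 1))
    fun k _ => (hmono k).const_mul (P.coeff k)) (fun x (hx : 0 < x) => ?_) measurableSet_Ioi
  simp only [eval_mul_rpow_eq_sum P hx, sum_mul, mul_assoc]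

theorem integrableOn_laguerreInner (A B : ℝ[X]) :
    IntegrableOn (fun x => A.eval x * B.eval x * x ^ β * exp (-x)) (Set.Ioi 0) := by
  simpa only [eval_mul] using integrableOn_eval_mul_rpow_mul_exp_neg hβ (A * B)

/-- The integrand is the derivative of `R x * x ^ (β + 1) * exp (-x)`, which vanishes at `0`
and at `∞`. -/
theorem integral_boundary_eq_zero (R : ℝ[X]) :
    ∫ x in Set.Ioi (0 : ℝ), ((C (β + 1) - X) * R + X * derivative R).eval x * x ^ β * exp (-x)
      = 0 := by
  set f : ℝ → ℝ := fun x => R.eval x * x ^ (β + 1) * exp (-x)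
  have hβ1 : 0 < β + 1 := by linarith
  have hcont : ContinuousWithinAt f (Set.Ici 0) 0 := by
    have := continuousAt_rpow_const 0 (β + 1) (Or.inr hβ1.le)
    fun_prop
  have hderiv (x : ℝ) (hx : x ∈ Set.Ioi 0) : HasDerivAt f
      (((C (β + 1) - X) * R + X * derivative R).eval x * x ^ β * exp (-x)) x := by
    have hx : 0 < x := hx
    have hpow := hasDerivAt_rpow_const (x := x) (p := β + 1) (Or.inl hx.ne')
    rw [add_sub_cancel_right] at hpow
    refine (((R.hasDerivAt x).mul hpow).mul (hasDerivAt_neg x).exp).congr_deriv ?_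
    simp only [eval_add, eval_mul, eval_sub, eval_C, eval_X, Pi.mul_apply, rpow_add_one hx.ne']
    ring
  have htop : Tendsto f atTop (𝓝 0) := by
    have := tendsto_finsetSum (range (R.natDegree + 1)) fun k _ =>
      (tendsto_rpow_mul_exp_neg_mul_atTop_nhds_zero (β + 1 + k) 1 one_pos).const_mul (R.coeff k)
    simp only [mul_zero, sum_const_zero, neg_mul, one_mul] at this
    refine this.congr' ((eventually_gt_atTop 0).mono fun x hx => ?_)
    show _ = R.eval x * x ^ (β + 1) * exp (-x)
    rw [eval_mul_rpow_eq_sum R hx, sum_mul]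
    simp only [mul_assoc]
  have := integral_Ioi_of_hasDerivAt_of_tendsto hcont hderiv
    (integrableOn_eval_mul_rpow_mul_exp_neg hβ _) htop
  simpa [f, zero_rpow hβ1.ne'] using this

theorem laguerreInner_laguerreOp_left {n : ℕ} (A B : ℝ[X]) :
    laguerreInner β (laguerreOp β n A) B = laguerreInner β A (laguerreOp β n B) := by
  rw [← sub_eq_zero, laguerreInner, laguerreInner,
    ← integral_sub (integrableOn_laguerreInner hβ _ _) (integrableOn_laguerreInner hβ _ _)]
  refine Eq.trans (integral_congr_ae (ae_of_all _ fun x => ?_))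
    (integral_boundary_eq_zero hβ (derivative A * B - A * derivative B))
  rw [← laguerreOp_mul_sub_mul_laguerreOp (n := n)]
  simp only [eval_sub, eval_mul]
  ring

theorem eq_zero_of_laguerreInner_self_eq_zero {G : ℝ[X]} (hG : laguerreInner β G G = 0) :
    G = 0 := by
  set f := fun x => G.eval x * G.eval x * x ^ β * exp (-x)
  have hnonneg : 0 ≤ᵐ[volume.restrict (Set.Ioi 0)] f :=
    ae_restrict_of_forall_mem measurableSet_Ioi fun x (hx : 0 < x) =>
      mul_nonneg (mul_nonneg (mul_self_nonneg _) (rpow_nonneg hx.le _)) (exp_pos _).le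
  have hf : ContinuousOn f (Set.Ioi 0) :=
    ((G.continuousOn.mul G.continuousOn).mul
      (continuousOn_id.rpow_const fun x hx => Or.inl (ne_of_gt hx))).mul (by fun_prop)
  have hzero := Measure.eqOn_open_of_ae_eq
    ((integral_eq_zero_iff_of_nonneg_ae hnonneg (integrableOn_laguerreInner hβ G G)).mp hG)
    isOpen_Ioi hf continuousOn_const
  refine G.eq_zero_of_infinite_isRoot ((Set.Ioi_infinite 0).mono fun x (hx : 0 < x) => ?_)
  have := hzero hx
  simp only [f, Pi.zero_apply, mul_eq_zero, (rpow_pos_of_pos hx β).ne', (exp_pos _).ne',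
    or_self, or_false] at this
  exact this

theorem laguerreOp_eq_zero_of_orthogonal {n : ℕ} {L : ℝ[X]} (hL : L.natDegree ≤ n)
    (horth : ∀ Q : ℝ[X], Q.degree < n → laguerreInner β L Q = 0) :
    laguerreOp β n L = 0 := by
  have hG := degree_laguerreOp_lt (β := β) hL
  refine eq_zero_of_laguerreInner_self_eq_zero hβ ?_
  rw [laguerreInner_laguerreOp_left hβ]
  exact horth _ (degree_laguerreOp_lt (natDegree_le_of_degree_le hG.le))

end LaguerreInner

section Nodal

variable {ι F : Type*} [DecidableEq ι] [Field F] {s : Finset ι} {v : ι → F} {x : F}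

theorem eval_nodal_erase_of_not_node (hx : ∀ i ∈ s, x ≠ v i) {i : ι} (hi : i ∈ s) :
    (nodal (s.erase i) v).eval x = (nodal s v).eval x * (x - v i)⁻¹ := by
  rw [nodal_eq_mul_nodal_erase hi, eval_mul, eval_sub, eval_X, eval_C, mul_comm _ (eval _ _),
    mul_inv_cancel_right₀ (sub_ne_zero.mpr (hx i hi))]

theorem eval_derivative_nodal_of_not_node (hx : ∀ i ∈ s, x ≠ v i) :
    (derivative (nodal s v)).eval x = (nodal s v).eval x * ∑ i ∈ s, (x - v i)⁻¹ := by
  rw [derivative_nodal, eval_finsetSum, mul_sum]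
  exact sum_congr rfl fun i hi => eval_nodal_erase_of_not_node hx hi

theorem eval_derivative_derivative_nodal_of_not_node (hx : ∀ i ∈ s, x ≠ v i) :
    (derivative (derivative (nodal s v))).eval x =
      (nodal s v).eval x *
        ((∑ i ∈ s, (x - v i)⁻¹) ^ 2 - ∑ i ∈ s, ((x - v i)⁻¹) ^ 2) := by
  rw [derivative_nodal, map_sum, eval_finsetSum, sq, sum_mul, ← sum_sub_distrib, mul_sum]
  refine sum_congr rfl fun i hi => ?_
  rw [eval_derivative_nodal_of_not_node fun j hj => hx j (mem_of_mem_erase hj),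
    eval_nodal_erase_of_not_node hx hi, sum_erase_eq_sub hi]
  ring

theorem eval_derivative_nodal_erase_at_node {i j : ι} (hi : i ∈ s) (hj : j ∈ s)
    (hij : i ≠ j) :
    (derivative (nodal (s.erase i) v)).eval (v j) * (v j - v i) =
      (nodal (s.erase j) v).eval (v j) := by
  rw [eval_nodal_derivative_eval_node_eq (mem_erase.mpr ⟨hij.symm, hj⟩), erase_right_comm,
    nodal_eq_mul_nodal_erase (mem_erase.mpr ⟨hij, hi⟩) (s := s.erase j)]
  simp only [eval_mul, eval_sub, eval_X, eval_C]
  ring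

end Nodal

theorem prod_eq_of_laguerreOp_nodal_eq_zero {β : ℝ} {n : ℕ} {z : Fin n → ℝ}
    (hp : laguerreOp β n (nodal univ z) = 0) : ∏ i, z i = ∏ k ∈ range n, (β + 1 + k) := by
  have hcoeff := coeff_zero_of_laguerreOp_eq_zero hp
  have hmonic : (nodal univ z).coeff n = 1 := by
    simpa using (nodal_monic (s := univ) (v := z)).coeff_natDegree
  rw [coeff_zero_eq_eval_zero, eval_nodal, hmonic, mul_one] at hcoeff
  simp only [zero_sub, prod_neg, card_univ, Fintype.card_fin] at hcoeff
  exact mul_left_cancel₀ (pow_ne_zero n (neg_ne_zero.mpr one_ne_zero)) hcoeff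

theorem eq_C_leadingCoeff_mul_nodal_s19 {ι F : Type*} [Fintype ι] [Field F] {L : F[X]} {z : ι → F}
    (hz : Function.Injective z) (hL : L.natDegree = Fintype.card ι)
    (hroot : ∀ i, L.eval (z i) = 0) : L = C L.leadingCoeff * nodal univ z := by
  rcases eq_or_ne L 0 with rfl | hL₀
  · simp
  have hdeg : L.degree = #(univ : Finset ι) := by rw [degree_eq_natDegree hL₀, hL, card_univ]
  refine eq_of_degree_le_of_eval_index_eq univ hz.injOn hdeg.le ?_ ?_ fun i _ => ?_
  · rw [degree_C_mul (leadingCoeff_ne_zero.mpr hL₀), degree_nodal, hdeg]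
  · rw [leadingCoeff_mul, leadingCoeff_C, nodal_monic.leadingCoeff, mul_one]
  · rw [eval_mul, eval_nodal_at_node (mem_univ i), mul_zero, hroot]

noncomputable def stieltjesMatrix {ι : Type*} [Fintype ι] [DecidableEq ι]
    (β : ℝ) (z : ι → ℝ) : Matrix ι ι ℝ :=
  Matrix.of fun i j =>
    if i = j then (β + 1) / z j ^ 2 + 2 * ∑ l ∈ univ.erase j, 1 / (z j - z l) ^ 2
    else -2 / (z i - z j) ^ 2

section Nodes

variable {β : ℝ} {n : ℕ} {ι : Type*} [Fintype ι] [DecidableEq ι] {z : ι → ℝ}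
  (hz : Function.Injective z) (hp : laguerreOp β n (nodal univ z) = 0)

include hp in
theorem laguerreOp_nodal_erase_relation (i : ι) :
    (X - C (z i)) * laguerreOp β n (nodal (univ.erase i) z) +
      (2 * X * derivative (nodal (univ.erase i) z) +
        (C (β + 1) - X) * nodal (univ.erase i) z) = 0 := by
  rw [← add_assoc, ← laguerreOp_X_sub_C_mul, ← nodal_eq_mul_nodal_erase (mem_univ i), hp]

include hz hp

theorem eval_laguerreOp_nodal_erase_of_ne {i j : ι} (hij : i ≠ j) :
    (laguerreOp β n (nodal (univ.erase i) z)).eval (z j) =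
      z j * (nodal (univ.erase j) z).eval (z j) * stieltjesMatrix β z j i := by
  have h := congrArg (eval (z j)) (laguerreOp_nodal_erase_relation hp i)
  simp only [eval_add, eval_mul, eval_sub, eval_X, eval_C, eval_ofNat, eval_zero,
    eval_nodal_at_node (mem_erase.mpr ⟨hij.symm, mem_univ j⟩), mul_zero, add_zero] at h
  have hd := eval_derivative_nodal_erase_at_node (v := z) (mem_univ i) (mem_univ j) hij
  have hji : z j - z i ≠ 0 := sub_ne_zero.mpr (hz.ne hij.symm)
  rw [stieltjesMatrix, of_apply, if_neg hij.symm]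
  field_simp
  linear_combination (z j - z i) * h - 2 * z j * hd

theorem eval_laguerreOp_nodal_erase_self {j : ι} (hj : z j ≠ 0) :
    (laguerreOp β n (nodal (univ.erase j) z)).eval (z j) =
      z j * (nodal (univ.erase j) z).eval (z j) * stieltjesMatrix β z j j := by
  have hrel := laguerreOp_nodal_erase_relation hp j
  have h₀ := congrArg (eval (z j)) hrel
  have h₁ := congrArg (fun q => (derivative q).eval (z j)) hrel
  simp only [eval_add, eval_mul, eval_sub, eval_X, eval_C, eval_ofNat, eval_zero, eval_one,
    derivative_add, derivative_mul, derivative_sub, derivative_X, derivative_C, derivative_ofNat,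
    derivative_zero, sub_self, zero_mul, zero_add, add_zero] at h₀ h₁
  have hnode : ∀ l ∈ univ.erase j, z j ≠ z l := fun l hl => hz.ne (mem_erase.mp hl).1.symm
  rw [eval_derivative_nodal_of_not_node hnode] at h₀ h₁
  rw [eval_derivative_derivative_nodal_of_not_node hnode] at h₁
  have hsq :
      ∑ l ∈ univ.erase j, 1 / (z j - z l) ^ 2 = ∑ l ∈ univ.erase j, ((z j - z l)⁻¹) ^ 2 :=
    sum_congr rfl fun l _ => by rw [one_div, inv_pow]
  rw [stieltjesMatrix, of_apply, if_pos rfl]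
  field_simp
  linear_combination z j * h₁ - (z j * ∑ l ∈ univ.erase j, (z j - z l)⁻¹ + 1) * h₀
    - 2 * z j ^ 2 * (nodal (univ.erase j) z).eval (z j) * hsq

end Nodes

def coeffMatrix {R ι : Type*} [Semiring R] (n : ℕ) (q : ι → R[X]) : Matrix (Fin n) ι R :=
  Matrix.of fun k i => (q i).coeff k

section CoeffMatrix

variable {R ι : Type*} [CommRing R] {n : ℕ} {q : ι → R[X]}

theorem vandermonde_mul_coeffMatrix (v : Fin n → R) (hq : ∀ i, (q i).natDegree < n) :
    vandermonde v * coeffMatrix n q = Matrix.of fun j i => (q i).eval (v j) := by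
  ext j i
  rw [mul_apply, of_apply, eval_eq_sum_range' (hq i), ← Fin.sum_univ_eq_sum_range]
  exact sum_congr rfl fun k _ => mul_comm _ _

theorem coeffMatrix_X_pow_mul_coeffMatrix (D : R[X] →ₗ[R] R[X])
    (hq : ∀ i, (q i).natDegree < n) :
    coeffMatrix n (fun m : Fin n => D (X ^ (m : ℕ))) * coeffMatrix n q =
      coeffMatrix n fun i => D (q i) := by
  ext k i
  simp only [coeffMatrix, mul_apply, of_apply]
  conv_rhs => rw [as_sum_range' (q i) n (hq i), map_sum, finsetSum_coeff,
    ← Fin.sum_univ_eq_sum_range]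
  refine sum_congr rfl fun m _ => ?_
  rw [← smul_X_eq_monomial, map_smul, coeff_smul, smul_eq_mul, mul_comm]

end CoeffMatrix

theorem det_coeffMatrix_laguerreOp_X_pow {β : ℝ} {n : ℕ} :
    (coeffMatrix n fun m : Fin n => laguerreOp β n (X ^ (m : ℕ))).det = n ! := by
  have hcoeff (k m : Fin n) : (laguerreOp β n (X ^ (m : ℕ))).coeff k =
      ((n : ℝ) - k) * (if (k : ℕ) = m then 1 else 0) +
        (k + 1) * (k + 1 + β) * (if (k : ℕ) + 1 = m then 1 else 0) := by
    simp only [coeff_laguerreOp, coeff_X_pow]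
  rw [det_of_isUpperTriangular]
  · simp only [coeffMatrix, of_apply, hcoeff, if_true, if_neg (Nat.succ_ne_self _), mul_one,
      mul_zero, add_zero]
    calc ∏ k : Fin n, ((n : ℝ) - k) = ∏ k ∈ range n, ((n : ℝ) - k) :=
          Fin.prod_univ_eq_prod_range (fun k => (n : ℝ) - k) n
      _ = ((∏ k ∈ range n, (n - k) : ℕ) : ℝ) := by
          rw [Nat.cast_prod]
          exact prod_congr rfl fun k hk => by rw [Nat.cast_sub (mem_range.mp hk).le]
      _ = n ! := by rw [← Nat.descFactorial_eq_prod_range, Nat.descFactorial_self]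
  · intro k m hmk
    simp only [coeffMatrix, of_apply, hcoeff]
    have : (m : ℕ) < k := hmk
    rw [if_neg (by omega), if_neg (by omega)]
    ring

theorem det_stieltjesMatrix {β : ℝ} {N : ℕ} {z : Fin N → ℝ} (hz : Function.Injective z)
    (hz₀ : ∀ i, z i ≠ 0) (hp : laguerreOp β N (nodal univ z) = 0) :
    (stieltjesMatrix β z).det = N ! / ∏ i, z i := by
  set ω : Fin N → ℝ[X] := fun i => nodal (univ.erase i) z
  set A : Fin N → ℝ := fun j => (ω j).eval (z j)
  have hω (i : Fin N) : (ω i).natDegree < N := by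
    simp only [ω, natDegree_nodal, card_erase_of_mem (mem_univ i), card_univ, Fintype.card_fin]
    exact Nat.sub_lt (Nat.zero_lt_of_lt i.isLt) one_pos
  have hA : ∏ j, A j ≠ 0 :=
    prod_ne_zero_iff.mpr fun j _ =>
      eval_nodal_not_at_node fun l hl => hz.ne (ne_of_mem_erase hl).symm
  have hvand : vandermonde z * coeffMatrix N ω = diagonal A := by
    rw [vandermonde_mul_coeffMatrix _ hω]
    ext j i
    rcases eq_or_ne j i with rfl | hji
    · rw [of_apply, diagonal_apply_eq]
    · rw [of_apply, diagonal_apply_ne _ hji,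
        eval_nodal_at_node (mem_erase.mpr ⟨hji, mem_univ j⟩)]
  -- Both sides are `((D ω_i)(z j))_{j,i}`.
  have hM : diagonal (fun j => z j * A j) * stieltjesMatrix β z =
      vandermonde z * (coeffMatrix N (fun m : Fin N => laguerreOp β N (X ^ (m : ℕ))) *
        coeffMatrix N ω) := by
    rw [coeffMatrix_X_pow_mul_coeffMatrix _ hω,
      vandermonde_mul_coeffMatrix _ fun i => natDegree_laguerreOp_lt (hω i)]
    ext j i
    rw [diagonal_mul, of_apply]
    rcases eq_or_ne i j with rfl | hij
    · exact (eval_laguerreOp_nodal_erase_self hz hp (hz₀ i)).symm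
    · exact (eval_laguerreOp_nodal_erase_of_ne hz hp hij).symm
  have hvand_det : (vandermonde z).det * (coeffMatrix N ω).det = ∏ j, A j := by
    rw [← det_mul, hvand, det_diagonal]
  have hdet := congrArg det hM
  rw [det_mul, det_mul, det_mul, det_diagonal, det_coeffMatrix_laguerreOp_X_pow,
    prod_mul_distrib] at hdet
  rw [eq_div_iff (prod_ne_zero_iff.mpr fun i _ => hz₀ i)]
  apply mul_left_cancel₀ hA
  linear_combination hdet + (N ! : ℝ) * hvand_det

theorem laguerre_matrix_det_general
    (N : ℕ) (β : ℝ) (hβ : -1 < β)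
    (L : Polynomial ℝ) (hLdeg : L.natDegree = N)
    (hLlead : L.leadingCoeff = (-1) ^ N / (N.factorial : ℝ))
    (hLorth : ∀ Q : Polynomial ℝ, Q.natDegree < N →
      ∫ x in Set.Ioi (0 : ℝ), L.eval x * Q.eval x * x ^ β * Real.exp (-x) = 0)
    (z : Fin N → ℝ) (hzmono : StrictMono z)
    (hzroot : ∀ i, L.eval (z i) = 0)
    (S : Matrix (Fin N) (Fin N) ℝ)
    (hS : S = Matrix.of fun i j =>
      if i = j then (β + 1) / z j ^ 2 + 2 * ∑ l ∈ Finset.univ.erase j, 1 / (z j - z l) ^ 2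
      else -2 / (z i - z j) ^ 2) :
    S.det = (N.factorial : ℝ) / ∏ j ∈ Finset.range N, (β + 1 + j) := by
  have hz := hzmono.injective
  have hlc : L.leadingCoeff ≠ 0 := by simp [hLlead, Nat.factorial_ne_zero]
  have hL : L = L.leadingCoeff • nodal univ z := by
    rw [smul_eq_C_mul]
    exact eq_C_leadingCoeff_mul_nodal_s19 hz (by rw [hLdeg, Fintype.card_fin]) hzroot
  have hLode : laguerreOp β N L = 0 := by
    refine laguerreOp_eq_zero_of_orthogonal hβ hLdeg.le fun Q hQ => ?_
    rcases eq_or_ne Q 0 with rfl | hQ₀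
    · simp [laguerreInner]
    · exact hLorth Q ((natDegree_lt_iff_degree_lt hQ₀).mpr hQ)
  have hp : laguerreOp β N (nodal univ z) = 0 := by
    rw [hL, map_smul, smul_eq_zero] at hLode
    exact hLode.resolve_left hlc
  have hprod := prod_eq_of_laguerreOp_nodal_eq_zero hp
  have hz₀ (i : Fin N) : z i ≠ 0 := by
    refine prod_ne_zero_iff.mp ?_ i (mem_univ i)
    rw [hprod]
    exact prod_ne_zero_iff.mpr fun k _ => by linarith [k.cast_nonneg (α := ℝ)]
  rw [hS, ← hprod]
  exact det_stieltjesMatrix hz hz₀ hp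

theorem laguerre_matrix_det
    (N : ℕ) (hN : 1 ≤ N) (β : ℝ) (hβ : -1 < β)
    (L : Polynomial ℝ) (hLdeg : L.natDegree = N)
    (hLlead : L.leadingCoeff = (-1) ^ N / (N.factorial : ℝ))
    (hLorth : ∀ Q : Polynomial ℝ, Q.natDegree < N →
      ∫ x in Set.Ioi (0 : ℝ), L.eval x * Q.eval x * x ^ β * Real.exp (-x) = 0)
    (z : Fin N → ℝ) (hzmono : StrictMono z)
    (hzroot : ∀ i, L.eval (z i) = 0)
    (hzpos : ∀ i, 0 < z i)
    (S : Matrix (Fin N) (Fin N) ℝ)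
    (hS : S = Matrix.of fun i j =>
      if i = j then (β + 1) / z j ^ 2 + 2 * ∑ l ∈ Finset.univ.erase j, 1 / (z j - z l) ^ 2
      else -2 / (z i - z j) ^ 2) :
    S.det = (N.factorial : ℝ) / ∏ j ∈ Finset.range N, (β + 1 + j) :=
  laguerre_matrix_det_general N β hβ L hLdeg hLlead hLorth z hzmono hzroot S hS
end
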